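/- arXiv:1007.3130 — 2 statements merged into one kernel-verified Lean document; each statement's English description precedes it below -/
import Mathlib

section
/- Let m be a positive natural number and W : Matrix (Fin m) (Fin m) ℝ with all entries nonnegative and every row sum at most 1. Assume I − W is invertible and that (I−W)⁻¹ has all entries nonnegative with every row of (I−W)⁻¹ having positive sum. For each index j, let ν_j : Fin m → ℝ be the j-th row of (I−W)⁻¹ normalized to sum to 1. For each j let W_j be the stochastic completion of W defined by W_j(x,y) = W(x,y) + (1 − ∑_z W(x,z)) if y = j and W_j(x,y) = W(x,y) otherwise. Then: (i) for each j, ν_j is a probability vector satisfying ν_j · W_j = ν_j; and (ii) for every row-stochastic matrix S with S(x,y) ≥ W(x,y) for all x, y, and every probability vector ν with ν · S = ν, it holds that min_j ν_j(x) ≤ ν(x) ≤ max_j ν_j(x) for every x. -/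
/-!
Write `A = (I - W)⁻¹` and `s j = ∑ y, A j y`. From `A (I - W) = I`, the row `ν j = A j / s j`
satisfies `ν j (I - W) = e_j / s j`: the mass that `ν j` loses under `W` is exactly `1 / s j`,
concentrated at `j`, which is what the completion `W_j` sends back to column `j`.
If `p S = p` with `S ≥ W`, then `q = p (I - W) = p (S - W) ≥ 0`, hence
`p = q A = ∑ j, (q j * s j) • ν j` is a convex combination of the `ν j`.
-/

open Finset Matrix

namespace Matrix

variable {ι R : Type*} [Fintype ι] [DecidableEq ι] [CommRing R]

/-- The single-column stochastic completion `W_j` of the paper. -/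
def columnCompletion (W : Matrix ι ι R) (j : ι) : Matrix ι ι R :=
  W + vecMulVec (1 - W *ᵥ 1) (Pi.single j 1)

theorem columnCompletion_apply (W : Matrix ι ι R) (j x y : ι) :
    columnCompletion W j x y = if y = j then W x y + (1 - ∑ z, W x z) else W x y := by
  by_cases h : y = j
  · subst h
    simp [columnCompletion, vecMulVec_apply, mulVec, dotProduct]
  · simp [columnCompletion, vecMulVec_apply, h]

theorem vecMul_columnCompletion_of_vecMul_eq_sub_single {W : Matrix ι ι R} {v : ι → R}
    {j : ι} {c : R} (h : v ᵥ* W = v - Pi.single j c) : v ᵥ* columnCompletion W j = v := by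
  have slack : v ⬝ᵥ (1 - W *ᵥ 1) = c := by
    rw [dotProduct_sub, dotProduct_mulVec, h, sub_dotProduct, single_dotProduct]
    simp
  rw [columnCompletion, vecMul_add, vecMul_vecMulVec, h, slack, ← Pi.single_smul', smul_eq_mul,
    mul_one, sub_add_cancel]

theorem row_inv_one_sub_vecMul {W : Matrix ι ι R} (hW : IsUnit (1 - W)) (j : ι) :
    (1 - W)⁻¹ j ᵥ* W = (1 - W)⁻¹ j - Pi.single j 1 := by
  have hrow : (1 - W)⁻¹ j ᵥ* (1 - W) = Pi.single j 1 := by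
    rw [← mul_apply_eq_vecMul, nonsing_inv_mul _ ((isUnit_iff_isUnit_det _).mp hW)]
    ext y
    exact one_eq_pi_single
  rw [← hrow, vecMul_sub, vecMul_one, sub_sub_cancel]

theorem eq_sum_smul_rows_inv_one_sub {W : Matrix ι ι R} (hW : IsUnit (1 - W)) (p : ι → R) :
    p = ∑ j, (p ᵥ* (1 - W)) j • (1 - W)⁻¹ j := by
  rw [← vecMul_eq_sum, vecMul_vecMul, mul_nonsing_inv _ ((isUnit_iff_isUnit_det _).mp hW),
    vecMul_one]

theorem vecMul_one_sub_nonneg [PartialOrder R] [IsOrderedRing R]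
    {W S : Matrix ι ι R} {p : ι → R} (hp : ∀ x, 0 ≤ p x) (hpS : p ᵥ* S = p)
    (hWS : ∀ x y, W x y ≤ S x y) (y : ι) : 0 ≤ (p ᵥ* (1 - W)) y := by
  have h : p ᵥ* (1 - W) = p ᵥ* (S - W) := by rw [vecMul_sub, vecMul_sub, vecMul_one, hpS]
  rw [h]
  exact sum_nonneg fun x _ => mul_nonneg (hp x) (sub_nonneg.mpr (hWS x y))

end Matrix

theorem mem_Icc_inf'_sup'_of_eq_sum_smul {ι κ R : Type*} [Fintype ι] [Fintype κ] [Field R]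
    [LinearOrder R] [IsStrictOrderedRing R] (hne : (univ : Finset ι).Nonempty)
    {ν : ι → κ → R} {w : ι → R} {p : κ → R} (hw : ∀ j, 0 ≤ w j)
    (hν : ∀ j, ∑ x, ν j x = 1) (hp : ∑ x, p x = 1) (hpw : p = ∑ j, w j • ν j) (x : κ) :
    p x ∈ Set.Icc (univ.inf' hne fun j => ν j x) (univ.sup' hne fun j => ν j x) := by
  have hpx : p x = ∑ j, w j • ν j x := by rw [hpw, Finset.sum_apply]; rfl
  have hw₁ : ∑ j, w j = 1 := by
    rw [← hp, hpw]
    simp only [Finset.sum_apply, Pi.smul_apply, smul_eq_mul]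
    rw [Finset.sum_comm]
    simp [← Finset.mul_sum, hν]
  rw [hpx, ← univ.centerMass_eq_of_sum_1 _ hw₁]
  have hw₀ : ∀ j ∈ univ, 0 ≤ w j := fun j _ => hw j
  exact ⟨inf_le_centerMass hw₀ (hw₁ ▸ one_pos), centerMass_le_sup hw₀ (hw₁ ▸ one_pos)⟩

open Classical in
theorem courtois_semal_bounds_general
    (m : ℕ) (hm : 0 < m) (W : Matrix (Fin m) (Fin m) ℝ)
    (hinv : IsUnit (1 - W))
    (hinvnn : ∀ x y, 0 ≤ (1 - W)⁻¹ x y)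
    (hinvpos : ∀ x, 0 < ∑ y, (1 - W)⁻¹ x y)
    (ν : Fin m → Fin m → ℝ)
    (hν : ∀ j x, ν j x = (1 - W)⁻¹ j x / ∑ y, (1 - W)⁻¹ j y)
    (Wc : Fin m → Matrix (Fin m) (Fin m) ℝ)
    (hWc : ∀ j x y, Wc j x y = if y = j then W x y + (1 - ∑ z, W x z) else W x y) :
    (∀ j, (∀ x, 0 ≤ ν j x) ∧ (∑ x, ν j x = 1) ∧ (∀ y, ∑ x, ν j x * Wc j x y = ν j y)) ∧
      (∀ S : Matrix (Fin m) (Fin m) ℝ,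
        (∀ x y, 0 ≤ S x y) → (∀ x, ∑ y, S x y = 1) → (∀ x y, W x y ≤ S x y) →
        ∀ p : Fin m → ℝ, (∀ x, 0 ≤ p x) → (∑ x, p x = 1) →
          (∀ y, ∑ x, p x * S x y = p y) →
          ∀ x, (Finset.univ.inf' ⟨⟨0, hm⟩, Finset.mem_univ _⟩ fun j => ν j x) ≤ p x ∧
            p x ≤ (Finset.univ.sup' ⟨⟨0, hm⟩, Finset.mem_univ _⟩ fun j => ν j x)) := by
  set A := (1 - W)⁻¹
  have hνA : ∀ j, ν j = (∑ y, A j y)⁻¹ • A j := fun j => funext fun x => by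
    rw [hν, Pi.smul_apply, smul_eq_mul, div_eq_inv_mul]
  have hνsum : ∀ j, ∑ x, ν j x = 1 := fun j => by
    simp_rw [hν, ← Finset.sum_div]
    exact div_self (hinvpos j).ne'
  have hWc_eq : Wc = columnCompletion W := by
    ext j x y
    rw [hWc, columnCompletion_apply]
  refine ⟨fun j => ⟨fun x => ?_, hνsum j, fun y => ?_⟩, ?_⟩
  · rw [hν]
    exact div_nonneg (hinvnn j x) (hinvpos j).le
  · have hstat : ν j ᵥ* columnCompletion W j = ν j := by
      rw [hνA, smul_vecMul,
        vecMul_columnCompletion_of_vecMul_eq_sub_single (row_inv_one_sub_vecMul hinv j)]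
    rw [hWc_eq]
    exact congrFun hstat y
  · intro S _ _ hWS p hp hpsum hpS x
    have hq := vecMul_one_sub_nonneg hp (funext hpS) hWS
    refine mem_Icc_inf'_sup'_of_eq_sum_smul _ (w := fun j => (p ᵥ* (1 - W)) j * ∑ y, A j y)
      (fun j => mul_nonneg (hq j) (hinvpos j).le) hνsum hpsum ?_ x
    conv_lhs => rw [eq_sum_smul_rows_inv_one_sub hinv p]
    refine Finset.sum_congr rfl fun j _ => ?_
    rw [hνA, smul_smul, mul_assoc, mul_inv_cancel₀ (hinvpos j).ne', mul_one]

open Classical in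
/-- Courtois–Semal-type bounds: the normalized rows `ν j` of `(I − W)⁻¹` are the
stationary distributions of the single-column stochastic completions `Wc j` of the
substochastic matrix `W`, and the stationary distribution of any stochastic completion
`S ≥ W` is bounded componentwise between the minimum and maximum of the `ν j`. -/
theorem courtois_semal_bounds
    (m : ℕ) (hm : 0 < m) (W : Matrix (Fin m) (Fin m) ℝ)
    (hWnn : ∀ x y, 0 ≤ W x y) (hWrow : ∀ x, ∑ y, W x y ≤ 1)
    (hinv : IsUnit (1 - W))
    (hinvnn : ∀ x y, 0 ≤ (1 - W)⁻¹ x y)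
    (hinvpos : ∀ x, 0 < ∑ y, (1 - W)⁻¹ x y)
    (ν : Fin m → Fin m → ℝ)
    (hν : ∀ j x, ν j x = (1 - W)⁻¹ j x / ∑ y, (1 - W)⁻¹ j y)
    (Wc : Fin m → Matrix (Fin m) (Fin m) ℝ)
    (hWc : ∀ j x y, Wc j x y = if y = j then W x y + (1 - ∑ z, W x z) else W x y) :
    (∀ j, (∀ x, 0 ≤ ν j x) ∧ (∑ x, ν j x = 1) ∧ (∀ y, ∑ x, ν j x * Wc j x y = ν j y)) ∧
      (∀ S : Matrix (Fin m) (Fin m) ℝ,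
        (∀ x y, 0 ≤ S x y) → (∀ x, ∑ y, S x y = 1) → (∀ x y, W x y ≤ S x y) →
        ∀ p : Fin m → ℝ, (∀ x, 0 ≤ p x) → (∑ x, p x = 1) →
          (∀ y, ∑ x, p x * S x y = p y) →
          ∀ x, (Finset.univ.inf' ⟨⟨0, hm⟩, Finset.mem_univ _⟩ fun j => ν j x) ≤ p x ∧
            p x ≤ (Finset.univ.sup' ⟨⟨0, hm⟩, Finset.mem_univ _⟩ fun j => ν j x)) :=
  courtois_semal_bounds_general m hm W hinv hinvnn hinvpos ν hν Wc hWc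
end

section
/- Let m be a natural number, P : Matrix (Fin m) (Fin m) ℝ a row-stochastic matrix (all entries nonnegative, every row sum equal to 1), and C a subset of Fin m with complement C̄. Write P[C,C], P[C,C̄], P[C̄,C], P[C̄,C̄] for the corresponding submatrices (indexed by the subtypes of C and C̄). Assume I − P[C̄,C̄] is invertible, and define the stochastic complement S = P[C,C] + P[C,C̄] · (I − P[C̄,C̄])⁻¹ · P[C̄,C]. Let π : Fin m → ℝ be a probability vector with π · P = π and ∑_{c ∈ C} π(c) > 0. Then: (i) S is row-stochastic; and (ii) the vector π_C on C defined by π_C(x) = π(x) / ∑_{c ∈ C} π(c) satisfies π_C · S = π_C. -/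
/-!
Write `P = [[A, B], [D, E]]` in blocks indexed by `C` and its complement and `N = (1 - E)⁻¹`.
The rows of `P` sum to one, so `D 1 = (1 - E) 1`, hence `N D 1 = 1` and `S 1 = A 1 + B 1 = 1`.
The `C̄`-block of `π P = π` reads `π_C̄ (1 - E) = π_C B`, i.e. `π_C̄ = π_C B N`, and substituting
this into the `C`-block `π_C A + π_C̄ D = π_C` gives `π_C S = π_C`.
For `S ≥ 0` it remains to see `N ≥ 0`, a minimum principle: if `(1 - E) x ≥ 0` and `x` had a
negative minimum, then from each state where the minimum is attained `E` could only move to such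
states and would have row sum one; on that closed class `1 - E` kills the constant vectors, so
`1 - E` would be singular.
-/

open Finset

namespace Matrix

variable {R ι κ n : Type*}

section BlockMultiplication

variable [NonUnitalNonAssocSemiring R] [Fintype n] (p : n → Prop) [DecidablePred p]

theorem toBlock_mulVec_add_toBlock_mulVec {m : Type*} (P : Matrix m n R) (q : m → Prop)
    (v : n → R) :
    P.toBlock q p *ᵥ (fun j => v j) + P.toBlock q (fun j => ¬p j) *ᵥ (fun j => v j) =
      fun i : {i // q i} => (P *ᵥ v) i := by
  ext i
  exact Fintype.sum_subtype_add_sum_subtype p fun j => P i j * v j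

theorem vecMul_toBlock_add_vecMul_toBlock {m : Type*} (P : Matrix n m R) (q : m → Prop)
    (v : n → R) :
    (fun i : {i // p i} => v i) ᵥ* P.toBlock p q +
      (fun i : {i // ¬p i} => v i) ᵥ* P.toBlock (fun i => ¬p i) q =
      fun j : {j // q j} => (v ᵥ* P) j := by
  ext j
  exact Fintype.sum_subtype_add_sum_subtype p fun i => v i * P i j

end BlockMultiplication

section MinimumPrinciple

variable [Fintype n] [DecidableEq n]

theorem not_isUnit_one_sub_of_closed_class [CommRing R] [Nontrivial R] {E : Matrix n n R}
    (M : Set n) [DecidablePred (· ∈ M)] (hM : M.Nonempty)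
    (hclosed : ∀ i ∈ M, ∀ j ∉ M, E i j = 0) (hrow : ∀ i ∈ M, ∑ j, E i j = 1) :
    ¬IsUnit (1 - E) := by
  intro hE
  have hzero : (1 - E).toBlock (· ∈ M) (· ∉ M) = 0 := by
    ext i j
    have hij : (i : n) ≠ j := fun h => j.2 (h ▸ i.2)
    simp [toBlock_apply, one_apply_ne hij, hclosed i i.2 j j.2]
  set A := (1 - E).toBlock (· ∈ M) (· ∈ M)
  have hA : A * ((1 - E)⁻¹).toBlock (· ∈ M) (· ∈ M) = 1 := by
    have := toBlock_mul_eq_add (· ∈ M) (· ∈ M) (· ∈ M) (1 - E) (1 - E)⁻¹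
    rwa [mul_nonsing_inv _ ((isUnit_iff_isUnit_det _).mp hE), hzero, Matrix.zero_mul, add_zero,
      toBlock_one_self, eq_comm] at this
  have hA1 : A *ᵥ 1 = 0 := by
    have hsplit : A *ᵥ 1 + (1 - E).toBlock (· ∈ M) (· ∉ M) *ᵥ 1 =
        fun i : M => ((1 - E : Matrix n n R) *ᵥ 1) i :=
      toBlock_mulVec_add_toBlock_mulVec (· ∈ M) (1 - E) (· ∈ M) 1
    rw [hzero, zero_mulVec, add_zero] at hsplit
    ext i
    rw [hsplit, sub_mulVec, one_mulVec]
    simp [mulVec, dotProduct, hrow i i.2]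
  have hconst : (1 : M → R) = 0 := by
    rw [← one_mulVec (1 : M → R), ← mul_eq_one_comm.mp hA, ← mulVec_mulVec, hA1, mulVec_zero]
  obtain ⟨i, hi⟩ := hM
  exact one_ne_zero (congrFun hconst ⟨i, hi⟩)

variable [Field R] [LinearOrder R] [IsStrictOrderedRing R] {E : Matrix n n R}

theorem nonneg_of_nonneg_one_sub_mulVec (hE : ∀ i j, 0 ≤ E i j) (hrow : E *ᵥ 1 ≤ 1)
    (hunit : IsUnit (1 - E)) {x : n → R} (hx : 0 ≤ (1 - E) *ᵥ x) : 0 ≤ x := by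
  classical
  by_contra hneg
  obtain ⟨i, hi⟩ : ∃ i, x i < 0 := by simpa [Pi.le_def] using hneg
  obtain ⟨i₀, -, hmin⟩ := exists_min_image univ x ⟨i, mem_univ i⟩
  set μ := x i₀
  have hμ : μ < 0 := (hmin i (mem_univ i)).trans_lt hi
  have hmin_row : ∀ i, x i = μ → ∑ j, E i j * (x j - μ) = 0 ∧ ∑ j, E i j = 1 := by
    intro i hxi
    have hrow_i : ∑ j, E i j ≤ 1 := by simpa [mulVec, dotProduct] using hrow i
    have hx_i : ∑ j, E i j * x j ≤ μ := by
      have := hx i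
      rw [sub_mulVec, one_mulVec, Pi.sub_apply, hxi] at this
      simpa [mulVec, dotProduct] using this
    have hexcess : ∑ j, E i j * (x j - μ) = ∑ j, E i j * x j - (∑ j, E i j) * μ := by
      simp only [mul_sub, sum_sub_distrib, sum_mul]
    have hpos : 0 ≤ ∑ j, E i j * (x j - μ) :=
      sum_nonneg fun j _ => mul_nonneg (hE i j) (sub_nonneg.2 (hmin j (mem_univ j)))
    constructor <;> nlinarith
  refine not_isUnit_one_sub_of_closed_class {i | x i = μ} ⟨i₀, rfl⟩ (fun i hi j hj => ?_)
    (fun i hi => (hmin_row i hi).2) hunit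
  have := (sum_eq_zero_iff_of_nonneg fun k _ =>
    mul_nonneg (hE i k) (sub_nonneg.2 (hmin k (mem_univ k)))).1 (hmin_row i hi).1 j (mem_univ j)
  exact (mul_eq_zero.1 this).resolve_right (sub_ne_zero.2 hj)

theorem inv_one_sub_nonneg (hE : ∀ i j, 0 ≤ E i j) (hrow : E *ᵥ 1 ≤ 1)
    (hunit : IsUnit (1 - E)) (i j : n) : 0 ≤ (1 - E)⁻¹ i j := by
  have hcol : (1 - E) *ᵥ (fun k => (1 - E)⁻¹ k j) = fun k => (1 : Matrix n n R) k j :=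
    funext fun k => congrFun (congrFun (mul_nonsing_inv _ ((isUnit_iff_isUnit_det _).mp hunit)) k) j
  refine nonneg_of_nonneg_one_sub_mulVec hE hrow hunit (x := fun k => (1 - E)⁻¹ k j) ?_ i
  rw [hcol]
  exact fun k => zero_le_one_elem k j

end MinimumPrinciple

section StochasticComplement

variable [Fintype ι] [Fintype κ] [DecidableEq κ]

noncomputable def stochasticComplement [CommRing R] (A : Matrix ι ι R) (B : Matrix ι κ R)
    (D : Matrix κ ι R) (E : Matrix κ κ R) : Matrix ι ι R :=
  A + B * (1 - E)⁻¹ * D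

variable {A : Matrix ι ι R} {B : Matrix ι κ R} {D : Matrix κ ι R} {E : Matrix κ κ R}

theorem stochasticComplement_mulVec_one [CommRing R] (hunit : IsUnit (1 - E))
    (hrowA : A *ᵥ 1 + B *ᵥ 1 = 1) (hrowD : D *ᵥ 1 + E *ᵥ 1 = 1) :
    stochasticComplement A B D E *ᵥ 1 = 1 := by
  have hD : D *ᵥ 1 = (1 - E) *ᵥ 1 := by
    rw [sub_mulVec, one_mulVec]
    exact eq_sub_of_add_eq hrowD
  have hND : (1 - E)⁻¹ *ᵥ (D *ᵥ 1) = 1 := by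
    rw [hD, mulVec_mulVec, nonsing_inv_mul _ ((isUnit_iff_isUnit_det _).mp hunit), one_mulVec]
  rw [stochasticComplement, add_mulVec, ← mulVec_mulVec, ← mulVec_mulVec, hND, hrowA]

theorem vecMul_stochasticComplement [CommRing R] (hunit : IsUnit (1 - E)) {u : ι → R}
    {v : κ → R} (hu : u ᵥ* A + v ᵥ* D = u) (hv : u ᵥ* B + v ᵥ* E = v) :
    u ᵥ* stochasticComplement A B D E = u := by
  have hvB : v ᵥ* (1 - E) = u ᵥ* B := by
    rw [vecMul_sub, vecMul_one]
    exact (eq_sub_of_add_eq hv).symm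
  have hv_eq : v = u ᵥ* B ᵥ* (1 - E)⁻¹ := by
    rw [← hvB, vecMul_vecMul, mul_nonsing_inv _ ((isUnit_iff_isUnit_det _).mp hunit), vecMul_one]
  rw [stochasticComplement, vecMul_add, ← vecMul_vecMul, ← vecMul_vecMul, ← hv_eq, hu]

theorem stochasticComplement_mem_rowStochastic [Field R] [LinearOrder R] [IsStrictOrderedRing R]
    [DecidableEq ι] (hA : ∀ i j, 0 ≤ A i j) (hB : ∀ i j, 0 ≤ B i j) (hD : ∀ i j, 0 ≤ D i j)
    (hE : ∀ i j, 0 ≤ E i j) (hunit : IsUnit (1 - E))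
    (hrowA : A *ᵥ 1 + B *ᵥ 1 = 1) (hrowD : D *ᵥ 1 + E *ᵥ 1 = 1) :
    stochasticComplement A B D E ∈ rowStochastic R ι := by
  have hrowE : E *ᵥ 1 ≤ 1 := by
    refine (le_add_of_nonneg_left fun i => ?_).trans_eq hrowD
    exact sum_nonneg fun j _ => mul_nonneg (hD i j) zero_le_one
  have hN := inv_one_sub_nonneg hE hrowE hunit
  refine ⟨fun i j => add_nonneg (hA i j) (sum_nonneg fun k _ => mul_nonneg ?_ (hD k j)),
    stochasticComplement_mulVec_one hunit hrowA hrowD⟩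
  exact sum_nonneg fun l _ => mul_nonneg (hB i l) (hN l k)

end StochasticComplement

end Matrix

open Matrix

open Classical in
theorem stochastic_complement_stationary_general
    (m : ℕ) (P : Matrix (Fin m) (Fin m) ℝ)
    (hPnn : ∀ x y, 0 ≤ P x y) (hProw : ∀ x, ∑ y, P x y = 1)
    (C : Set (Fin m))
    (hinv : IsUnit
      (1 - P.submatrix (Subtype.val : {x // x ∉ C} → Fin m)
        (Subtype.val : {x // x ∉ C} → Fin m)))
    (S : Matrix {x // x ∈ C} {x // x ∈ C} ℝ)
    (hS : S = P.submatrix (Subtype.val : {x // x ∈ C} → Fin m)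
          (Subtype.val : {x // x ∈ C} → Fin m)
        + P.submatrix (Subtype.val : {x // x ∈ C} → Fin m)
            (Subtype.val : {x // x ∉ C} → Fin m)
          * (1 - P.submatrix (Subtype.val : {x // x ∉ C} → Fin m)
              (Subtype.val : {x // x ∉ C} → Fin m))⁻¹
          * P.submatrix (Subtype.val : {x // x ∉ C} → Fin m)
              (Subtype.val : {x // x ∈ C} → Fin m))
    (π : Fin m → ℝ)
    (hπstat : ∀ y, ∑ x, π x * P x y = π y) :
    ((∀ x y : {x // x ∈ C}, 0 ≤ S x y) ∧ (∀ x : {x // x ∈ C}, ∑ y, S x y = 1)) ∧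
      (∀ y : {x // x ∈ C},
        ∑ x : {x // x ∈ C}, (π x / ∑ c : {x // x ∈ C}, π c) * S x y
          = π y / ∑ c : {x // x ∈ C}, π c) := by
  subst hS
  have hP : P ∈ rowStochastic ℝ (Fin m) := mem_rowStochastic_iff_sum.2 ⟨hPnn, hProw⟩
  have hπP : π ᵥ* P = π := funext hπstat
  have hrow (q : Fin m → Prop) : P.toBlock q (· ∈ C) *ᵥ 1 + P.toBlock q (· ∉ C) *ᵥ 1 = 1 := by
    have := toBlock_mulVec_add_toBlock_mulVec (· ∈ C) P q 1
    rwa [one_vecMul_of_mem_rowStochastic hP] at this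
  have hstat (q : Fin m → Prop) :
      (fun i : {x // x ∈ C} => π i) ᵥ* P.toBlock (· ∈ C) q +
        (fun i : {x // x ∉ C} => π i) ᵥ* P.toBlock (· ∉ C) q = fun j : {x // q x} => π j := by
    rw [vecMul_toBlock_add_vecMul_toBlock (· ∈ C) P q π, hπP]
  refine ⟨mem_rowStochastic_iff_sum.1 <| stochasticComplement_mem_rowStochastic
    (fun _ _ => hPnn _ _) (fun _ _ => hPnn _ _) (fun _ _ => hPnn _ _) (fun _ _ => hPnn _ _)
    hinv (hrow _) (hrow _), fun y => ?_⟩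
  simp_rw [div_mul_eq_mul_div, ← sum_div]
  exact congrArg (· / _) (congrFun (vecMul_stochasticComplement hinv (hstat _) (hstat _)) y)

open Classical in
/-- Meyer's stochastic complementation theorem (finite case): the stochastic complement
`S = P[C,C] + P[C,C̄](I − P[C̄,C̄])⁻¹P[C̄,C]` of a set `C` of states of a finite Markov
chain with row-stochastic transition matrix `P` is row-stochastic, and the stationary
distribution of `P` conditioned on `C` is stationary for `S`. -/
theorem stochastic_complement_stationary
    (m : ℕ) (P : Matrix (Fin m) (Fin m) ℝ)
    (hPnn : ∀ x y, 0 ≤ P x y) (hProw : ∀ x, ∑ y, P x y = 1)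
    (C : Set (Fin m))
    (hinv : IsUnit
      (1 - P.submatrix (Subtype.val : {x // x ∉ C} → Fin m)
        (Subtype.val : {x // x ∉ C} → Fin m)))
    (S : Matrix {x // x ∈ C} {x // x ∈ C} ℝ)
    (hS : S = P.submatrix (Subtype.val : {x // x ∈ C} → Fin m)
          (Subtype.val : {x // x ∈ C} → Fin m)
        + P.submatrix (Subtype.val : {x // x ∈ C} → Fin m)
            (Subtype.val : {x // x ∉ C} → Fin m)
          * (1 - P.submatrix (Subtype.val : {x // x ∉ C} → Fin m)
              (Subtype.val : {x // x ∉ C} → Fin m))⁻¹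
          * P.submatrix (Subtype.val : {x // x ∉ C} → Fin m)
              (Subtype.val : {x // x ∈ C} → Fin m))
    (π : Fin m → ℝ) (hπnn : ∀ x, 0 ≤ π x) (hπ1 : ∑ x, π x = 1)
    (hπstat : ∀ y, ∑ x, π x * P x y = π y)
    (hπC : 0 < ∑ c : {x // x ∈ C}, π c) :
    ((∀ x y : {x // x ∈ C}, 0 ≤ S x y) ∧ (∀ x : {x // x ∈ C}, ∑ y, S x y = 1)) ∧
      (∀ y : {x // x ∈ C},
        ∑ x : {x // x ∈ C}, (π x / ∑ c : {x // x ∈ C}, π c) * S x y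
          = π y / ∑ c : {x // x ∈ C}, π c) :=
  stochastic_complement_stationary_general m P hPnn hProw C hinv S hS π hπstat
end
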